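/- Let u and v be permutation lattices of order f having the same diagram λ, and let 1 ≤ i ≤ f−1. If u_h = v_h for all h ∈ {1, …, f} with h ∉ {i, i+1}, then ◇_i(u,v) = ◇_i(v,u), where ◇_i(u,v) = ∇_{i+1}(u) − ∇_i(v). -/
import Mathlib


/-- `θ(k) = 1` if `k > 0` and `0` if `k < 0` (we also set it to `0` at `k = 0`,
a value never used since words have nonzero entries). -/
def theta (k : ℤ) : ℤ := if 0 < k then 1 else 0

/-- `hatCount w i k = #̂_{w^{(i)}}(k)`: the number of indices `1 ≤ j ≤ i` with `w j = k`
minus the number of indices `1 ≤ j ≤ i` with `w j = -k`.  A word of order `f` is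
represented by a function `w : ℕ → ℤ`, its entries being `w 1, …, w f` (1-based). -/
def hatCount (w : ℕ → ℤ) (i : ℕ) (k : ℤ) : ℤ :=
  (((Finset.Icc 1 i).filter fun j => w j = k).card : ℤ) -
    (((Finset.Icc 1 i).filter fun j => w j = -k).card : ℤ)

/-- `w : ℕ → ℤ` is a permutation lattice of order `f`: all entries `w 1, …, w f` are
nonzero, and for every prefix `w^{(i)}` (`1 ≤ i ≤ f`) the sequence
`k ↦ #̂_{w^{(i)}}(k)` (`k ≥ 1`) is weakly decreasing with nonnegative terms. -/
def IsPermLattice (f : ℕ) (w : ℕ → ℤ) : Prop :=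
  (∀ i, 1 ≤ i → i ≤ f → w i ≠ 0) ∧
  ∀ i, 1 ≤ i → i ≤ f → ∀ k : ℤ, 1 ≤ k →
    hatCount w i (k + 1) ≤ hatCount w i k ∧ 0 ≤ hatCount w i k

/-- The transpose word: `(w^t)_i = #̂_{w^{(i-1)}}(w_i) + θ(w_i)`. -/
def transposePL (w : ℕ → ℤ) : ℕ → ℤ := fun i => hatCount w (i - 1) (w i) + theta (w i)


open Polynomial in
/-- `∇_i(w) = ((w^t)_i − w_i − x) + x·θ(w_i)`, an element of `ℤ[x]`. -/
noncomputable def nabla (w : ℕ → ℤ) (i : ℕ) : Polynomial ℤ :=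
  (C (transposePL w i) - C (w i) - X) + X * C (theta (w i))

/-- The diamond function `◇_i(u,v) = ∇_{i+1}(u) − ∇_i(v)`. -/
noncomputable def diamond (u v : ℕ → ℤ) (i : ℕ) : Polynomial ℤ :=
  nabla u (i + 1) - nabla v i

def chiAux (x k : ℤ) : ℤ := (if x = k then 1 else 0) - (if x = -k then 1 else 0)

lemma hatCount_eq_sum (w : ℕ → ℤ) (i : ℕ) (k : ℤ) :
    hatCount w i k = ∑ j ∈ Finset.Icc 1 i, chiAux (w j) k := by
  unfold hatCount chiAux
  rw [Finset.sum_sub_distrib]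
  simp [Finset.sum_boole]

lemma hatCount_succ (w : ℕ → ℤ) (j : ℕ) (k : ℤ) :
    hatCount w (j+1) k = hatCount w j k + chiAux (w (j+1)) k := by
  rw [hatCount_eq_sum, hatCount_eq_sum, Finset.sum_Icc_succ_top (by omega : 1 ≤ j + 1)]

lemma hatCount_neg (w : ℕ → ℤ) (i : ℕ) (k : ℤ) : hatCount w i (-k) = - hatCount w i k := by
  unfold hatCount; rw [neg_neg]; ring

lemma chiAux_comm (x y : ℤ) : chiAux x y = chiAux y x := by
  unfold chiAux; split_ifs <;> omega

lemma chiAux_neg_self (x : ℤ) (hx : x ≠ 0) : chiAux x (-x) = -1 := by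
  unfold chiAux; split_ifs <;> omega

lemma theta_add_theta_neg (x : ℤ) (hx : x ≠ 0) : theta x + theta (-x) = 1 := by
  unfold theta; split_ifs <;> omega

lemma chi_cases (a b c d : ℤ) (ha : a ≠ 0) (hb : b ≠ 0) (hc : c ≠ 0) (hd : d ≠ 0)
    (E : ∀ k : ℤ, chiAux a k + chiAux b k = chiAux c k + chiAux d k) :
    (a = c ∧ b = d) ∨ (a = d ∧ b = c) ∨ (b = -a ∧ d = -c) := by
  by_cases hba : b = -a
  · right; right
    refine ⟨hba, ?_⟩
    have h := E c
    rw [hba] at h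
    simp only [chiAux] at h
    split_ifs at h <;> omega
  · by_cases hca : c = a
    · left
      refine ⟨hca.symm, ?_⟩
      have h := E b
      rw [hca] at h
      simp only [chiAux] at h
      split_ifs at h <;> omega
    · have hda : d = a := by
        have h := E a
        simp only [chiAux] at h
        split_ifs at h <;> omega
      subst hda
      have hcb : c = b := by
        have h := E b
        simp only [chiAux] at h
        split_ifs at h <;> omega
      exact Or.inr (Or.inl ⟨rfl, hcb.symm⟩)

/-- Let `u` and `v` be permutation lattices of order `f` with the same
diagram `λ`, and `1 ≤ i ≤ f−1`.  If `u_h = v_h` for all `h ∈ {1,…,f}` with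
`h ∉ {i, i+1}`, then `◇_i(u,v) = ◇_i(v,u)`. -/
theorem diamond_symm (f : ℕ) (u v : ℕ → ℤ)
    (hu : IsPermLattice f u) (hv : IsPermLattice f v)
    (hdiag : ∀ k : ℤ, 1 ≤ k → hatCount u f k = hatCount v f k)
    (i : ℕ) (hi1 : 1 ≤ i) (hif : i ≤ f - 1)
    (hcouple : ∀ h, 1 ≤ h → h ≤ f → h ≠ i → h ≠ i + 1 → u h = v h) :
    diamond u v i = diamond v u i := by
  have hf2 : i + 1 ≤ f := by omega
  have ha : u i ≠ 0 := hu.1 i hi1 (by omega)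
  have hb : u (i+1) ≠ 0 := hu.1 (i+1) (by omega) hf2
  have hc : v i ≠ 0 := hv.1 i hi1 (by omega)
  have hd : v (i+1) ≠ 0 := hv.1 (i+1) (by omega) hf2
  have hpre : ∀ k : ℤ, hatCount u (i-1) k = hatCount v (i-1) k := by
    intro k
    rw [hatCount_eq_sum, hatCount_eq_sum]
    apply Finset.sum_congr rfl
    intro j hj
    rw [Finset.mem_Icc] at hj
    rw [hcouple j hj.1 (by omega) (by omega) (by omega)]
  have hE : ∀ k : ℤ, chiAux (u i) k + chiAux (u (i+1)) k
      = chiAux (v i) k + chiAux (v (i+1)) k := by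
    have hpos : ∀ k : ℤ, 1 ≤ k → chiAux (u i) k + chiAux (u (i+1)) k
        = chiAux (v i) k + chiAux (v (i+1)) k := by
      intro k hk
      have hD := hdiag k hk
      rw [hatCount_eq_sum, hatCount_eq_sum] at hD
      have hsub : ({i, i+1} : Finset ℕ) ⊆ Finset.Icc 1 f := by
        intro x hx
        simp only [Finset.mem_insert, Finset.mem_singleton] at hx
        rw [Finset.mem_Icc]; omega
      have hzero : ∀ j ∈ Finset.Icc 1 f, j ∉ ({i, i+1} : Finset ℕ) →
          chiAux (u j) k - chiAux (v j) k = 0 := by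
        intro j hj hj'
        rw [Finset.mem_Icc] at hj
        simp only [Finset.mem_insert, Finset.mem_singleton] at hj'
        push_neg at hj'
        rw [hcouple j hj.1 hj.2 hj'.1 hj'.2]; ring
      have hsum := Finset.sum_subset hsub hzero
      rw [Finset.sum_pair (show i ≠ i + 1 by omega)] at hsum
      rw [Finset.sum_sub_distrib, hD, sub_self] at hsum
      linarith [hsum]
    intro k
    rcases lt_trichotomy k 0 with hk | hk | hk
    · have h := hpos (-k) (by omega)
      simp only [chiAux, neg_neg] at h ⊢
      split_ifs at h ⊢ <;> omega
    · subst hk; simp [chiAux]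
    · exact hpos k hk
  have hstepu : hatCount u i (u (i+1))
      = hatCount u (i-1) (u (i+1)) + chiAux (u i) (u (i+1)) := by
    have h := hatCount_succ u (i-1) (u (i+1))
    rwa [show i - 1 + 1 = i by omega] at h
  have hstepv : hatCount v i (v (i+1))
      = hatCount v (i-1) (v (i+1)) + chiAux (v i) (v (i+1)) := by
    have h := hatCount_succ v (i-1) (v (i+1))
    rwa [show i - 1 + 1 = i by omega] at h
  have key : ((hatCount u (i-1) (u i) + theta (u i))
        + (hatCount u i (u (i+1)) + theta (u (i+1))) - u i - u (i+1)
      = (hatCount v (i-1) (v i) + theta (v i))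
        + (hatCount v i (v (i+1)) + theta (v (i+1))) - v i - v (i+1))
      ∧ theta (u i) + theta (u (i+1)) = theta (v i) + theta (v (i+1)) := by
    rcases chi_cases (u i) (u (i+1)) (v i) (v (i+1)) ha hb hc hd hE with
      ⟨h1, h2⟩ | ⟨h1, h2⟩ | ⟨h1, h2⟩
    · constructor
      · rw [hstepu, hstepv, ← h1, ← h2, ← hpre, ← hpre]
      · rw [h1, h2]
    · constructor
      · rw [hstepu, hstepv, ← h1, ← h2, ← hpre, ← hpre, chiAux_comm (u (i+1)) (u i)]
        ring
      · rw [h1, h2]; ring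
    · constructor
      · rw [hstepu, hstepv, h1, h2, hatCount_neg, hatCount_neg,
          chiAux_neg_self _ ha, chiAux_neg_self _ hc, ← hpre]
        have t1 := theta_add_theta_neg _ ha
        have t2 := theta_add_theta_neg _ hc
        omega
      · rw [h1, h2]
        have t1 := theta_add_theta_neg _ ha
        have t2 := theta_add_theta_neg _ hc
        omega
  obtain ⟨key1, key2⟩ := key
  simp only [diamond, nabla, transposePL, Nat.add_sub_cancel, map_add]
  have H1 := congrArg (fun t : ℤ => (Polynomial.C t : Polynomial ℤ)) key1
  have H2 := congrArg (fun t : ℤ => (Polynomial.C t : Polynomial ℤ)) key2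
  simp only [map_add, map_sub] at H1 H2
  linear_combination H1 + Polynomial.X * H2
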